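/- Let m ≥ 1, r ≥ 1, and let k : Fin m → ℕ be even integers with 2r+1 ≤ k(i) for all i. In the m-dimensional r-nearest neighbor torus (the m-fold box product of the cycles C_{k(i)}^r), λ_{1,0,…,0} = 2r + 1 − sin((2r+1)π/k(1))/sin(π/k(1)) is an eigenvalue of the Laplacian matrix (with eigenvector v(x) = exp(2πi·x(1)/k(1))) and λ_{k(1)/2,…,k(m)/2} = m·(2r + 1 − cos(πr)) is an eigenvalue (with eigenvector w(x) = (−1)^{x(1)+⋯+x(m)}), and their quotient equals (2r + 1 − sin((2r+1)π/k(1))/sin(π/k(1))) / (m·(2r + 1 − cos(πr))). -/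

import Mathlib

open Real Complex SimpleGraph Matrix Finset

/-- The `r`-nearest neighbor cycle `C_n^r` on `ZMod n`: distinct vertices `a, b` are adjacent
iff `a - b ≡ s (mod n)` for some `s ∈ {1,…,r} ∪ {n-r,…,n-1}`, i.e. iff `a - b = s` or
`b - a = s` in `ZMod n` for some `1 ≤ s ≤ r`. -/
def nnCycle (n r : ℕ) : SimpleGraph (ZMod n) where
  Adj a b := a ≠ b ∧ ∃ s ∈ Finset.Icc 1 r, a - b = (s : ZMod n) ∨ b - a = (s : ZMod n)
  symm := by
    constructor
    rintro a b ⟨hne, s, hs, h⟩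
    exact ⟨hne.symm, s, hs, h.symm⟩
  loopless := by constructor; rintro a ⟨h, -⟩; exact h rfl

instance nnCycle.adjDecidable (n r : ℕ) : DecidableRel (nnCycle n r).Adj := fun a b =>
  inferInstanceAs (Decidable (a ≠ b ∧ ∃ s ∈ Finset.Icc 1 r,
    a - b = (s : ZMod n) ∨ b - a = (s : ZMod n)))

/-- The `m`-dimensional `r`-nearest neighbor torus: the `m`-fold Cartesian (box) product of
the cycles `C_{k i}^r`. Two tuples are adjacent iff they agree in all but one coordinate and
differ in that coordinate by an edge of the corresponding cycle. -/
def nnTorus (m r : ℕ) (k : Fin m → ℕ) : SimpleGraph ((i : Fin m) → ZMod (k i)) where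
  Adj x y := ∃ i, (∀ l, l ≠ i → x l = y l) ∧ (nnCycle (k i) r).Adj (x i) (y i)
  symm := by
    constructor
    rintro x y ⟨i, h1, h2⟩
    exact ⟨i, fun l hl => (h1 l hl).symm, (nnCycle (k i) r).symm.symm _ _ h2⟩
  loopless := by
    constructor
    rintro x ⟨i, -, h2⟩
    exact (nnCycle (k i) r).loopless.irrefl _ h2

instance nnTorus.adjDecidable (m r : ℕ) (k : Fin m → ℕ) :
    DecidableRel (nnTorus m r k).Adj := fun x y =>
  inferInstanceAs (Decidable (∃ i, (∀ l, l ≠ i → x l = y l) ∧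
    (nnCycle (k i) r).Adj (x i) (y i)))

/-! Every additive character `ψ` of `ZMod n` is an eigenvector of the Laplacian of `C_n^r`, with
eigenvalue `∑_{s=1}^r (2 - ψ s - ψ (-s))`, since the neighbours of `a` are the `a ± s`. Hence a
product of characters of the coordinates is an eigenvector of the torus, with the sum of these
eigenvalues. The vector `v` is the standard character of the first coordinate, whose eigenvalue is
evaluated by the Dirichlet kernel identity `sin((2r+1)x) = sin x (1 + ∑_{s=1}^r 2 cos(2sx))`;
`w` is the product of the characters `a ↦ (-1)^a`, which exist because every `k i` is even. -/

theorem SimpleGraph.lapMatrix_mulVec_apply_eq_sum {V R : Type*} [Fintype V] [DecidableEq V]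
    (G : SimpleGraph V) [DecidableRel G.Adj] [NonAssocRing R] (f : V → R) (x : V) :
    (G.lapMatrix R *ᵥ f) x = ∑ y ∈ G.neighborFinset x, (f x - f y) := by
  rw [lapMatrix_mulVec_apply, sum_sub_distrib, sum_const, card_neighborFinset_eq_degree,
    nsmul_eq_mul]

theorem ZMod.natCast_ne_zero_of_pos_of_lt {n j : ℕ} (h0 : 0 < j) (hj : j < n) :
    (j : ZMod n) ≠ 0 := by
  rw [Ne, ZMod.natCast_eq_zero_iff]
  exact fun hdvd => h0.ne' (Nat.eq_zero_of_dvd_of_lt hdvd hj)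

section nnCycle

variable {n r : ℕ}

theorem natCast_injOn_Icc (h : 2 * r + 1 ≤ n) :
    Set.InjOn (fun s : ℕ => (s : ZMod n)) (Icc 1 r) := fun s hs t ht hst => by
  simp only [coe_Icc, Set.mem_Icc] at hs ht
  simpa [ZMod.val_cast_of_lt (by omega : s < n), ZMod.val_cast_of_lt (by omega : t < n)]
    using congrArg ZMod.val hst

theorem natCast_add_natCast_ne_zero (h : 2 * r + 1 ≤ n) {s t : ℕ} (hs : s ∈ Icc 1 r)
    (ht : t ∈ Icc 1 r) : (s : ZMod n) + t ≠ 0 := by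
  rw [mem_Icc] at hs ht
  exact_mod_cast ZMod.natCast_ne_zero_of_pos_of_lt (by omega) (by omega)

theorem nnCycle_adj_iff (h : 2 * r + 1 ≤ n) {a b : ZMod n} :
    (nnCycle n r).Adj a b ↔ ∃ s ∈ Icc 1 r, b = a + s ∨ b = a - s := by
  refine ⟨fun ⟨_, s, hs, hab⟩ => ⟨s, hs, ?_⟩, fun ⟨s, hs, hb⟩ => ⟨?_, s, hs, ?_⟩⟩
  · rcases hab with hab | hab
    · exact Or.inr (by rw [← hab]; ring)
    · exact Or.inl (by rw [← hab]; ring)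
  · have hs0 : (s : ZMod n) ≠ 0 := by
      rw [mem_Icc] at hs
      exact ZMod.natCast_ne_zero_of_pos_of_lt (by omega) (by omega)
    rcases hb with rfl | rfl
    · exact fun hab => hs0 (by linear_combination -hab)
    · exact fun hab => hs0 (by linear_combination hab)
  · rcases hb with rfl | rfl
    · exact Or.inr (by ring)
    · exact Or.inl (by ring)

theorem nnCycle_neighborFinset [NeZero n] (h : 2 * r + 1 ≤ n) (a : ZMod n) :
    (nnCycle n r).neighborFinset a =
      (Icc 1 r).image (fun s : ℕ => a + s) ∪ (Icc 1 r).image (fun s : ℕ => a - s) := by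
  ext b
  simp only [mem_neighborFinset, nnCycle_adj_iff h, mem_union, mem_image, eq_comm (a := b),
    and_or_left, exists_or]

theorem sum_nnCycle_neighborFinset [NeZero n] {M : Type*} [AddCommMonoid M]
    (h : 2 * r + 1 ≤ n) (a : ZMod n) (g : ZMod n → M) :
    ∑ b ∈ (nnCycle n r).neighborFinset a, g b = ∑ s ∈ Icc 1 r, (g (a + s) + g (a - s)) := by
  rw [nnCycle_neighborFinset h, sum_union, sum_image, sum_image, sum_add_distrib]
  · exact fun s hs t ht hst => natCast_injOn_Icc h hs ht (by simpa using hst)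
  · exact fun s hs t ht hst => natCast_injOn_Icc h hs ht (by simpa using hst)
  · refine disjoint_left.2 fun b hb hb' => ?_
    obtain ⟨s, hs, rfl⟩ := mem_image.1 hb
    obtain ⟨t, ht, hst⟩ := mem_image.1 hb'
    exact natCast_add_natCast_ne_zero h hs ht (by linear_combination -hst)

end nnCycle

section nnTorus

variable {m r : ℕ} {k : Fin m → ℕ} [∀ i, NeZero (k i)]

theorem nnTorus_neighborFinset (x : (i : Fin m) → ZMod (k i)) :
    (nnTorus m r k).neighborFinset x =
      univ.biUnion fun i =>
        ((nnCycle (k i) r).neighborFinset (x i)).image (Function.update x i) := by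
  ext y
  simp only [mem_neighborFinset, mem_biUnion, mem_univ, true_and, mem_image,
    Function.update_eq_iff]
  exact exists_congr fun i => ⟨fun ⟨hxy, hadj⟩ => ⟨y i, hadj, rfl, hxy⟩,
    fun ⟨c, hadj, hc, hxy⟩ => ⟨hxy, hc ▸ hadj⟩⟩

theorem sum_nnTorus_neighborFinset {M : Type*} [AddCommMonoid M] (x : (i : Fin m) → ZMod (k i))
    (g : ((i : Fin m) → ZMod (k i)) → M) :
    ∑ y ∈ (nnTorus m r k).neighborFinset x, g y =
      ∑ i, ∑ c ∈ (nnCycle (k i) r).neighborFinset (x i), g (Function.update x i c) := by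
  rw [nnTorus_neighborFinset, sum_biUnion]
  · exact sum_congr rfl fun i _ => sum_image (Function.update_injective x i).injOn
  · intro i _ j _ hij
    refine disjoint_left.2 fun y hy hy' => ?_
    obtain ⟨c, hc, rfl⟩ := mem_image.1 hy
    obtain ⟨d, -, hd⟩ := mem_image.1 hy'
    have hxc : x i = c := by simpa [Function.update_of_ne hij] using congrFun hd i
    exact notMem_neighborFinset_self _ _ (hxc ▸ hc)

end nnTorus

theorem prod_addChar_update_add {ι R : Type*} [Fintype ι] [DecidableEq ι] [CommMonoid R]
    {A : ι → Type*} [∀ i, AddMonoid (A i)] (ψ : ∀ i, AddChar (A i) R) (x : ∀ i, A i)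
    (i : ι) (t : A i) :
    ∏ j, ψ j (Function.update x i (x i + t) j) = ψ i t * ∏ j, ψ j (x j) := by
  rw [← mul_prod_erase _ _ (mem_univ i), ← mul_prod_erase _ _ (mem_univ i),
    Function.update_self, AddChar.map_add_eq_mul,
    prod_congr rfl fun j hj => by rw [Function.update_of_ne (ne_of_mem_erase hj)],
    mul_assoc, mul_left_comm]

def nnCycleEigenvalue {R : Type*} [CommRing R] {n : ℕ} (r : ℕ) (ψ : AddChar (ZMod n) R) : R :=
  ∑ s ∈ Icc 1 r, (2 - ψ s - ψ (-s))

theorem nnCycleEigenvalue_one {R : Type*} [CommRing R] {n : ℕ} (r : ℕ) :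
    nnCycleEigenvalue r (1 : AddChar (ZMod n) R) = 0 := by
  simp only [nnCycleEigenvalue, AddChar.one_apply]
  norm_num

theorem nnTorus_lapMatrix_mulVec_prod_addChar {R : Type*} [CommRing R] {m r : ℕ}
    {k : Fin m → ℕ} [∀ i, NeZero (k i)] (hk : ∀ i, 2 * r + 1 ≤ k i)
    (ψ : ∀ i, AddChar (ZMod (k i)) R) :
    (nnTorus m r k).lapMatrix R *ᵥ (fun x => ∏ i, ψ i (x i)) =
      (∑ i, nnCycleEigenvalue r (ψ i)) • fun x => ∏ i, ψ i (x i) := by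
  ext x
  rw [lapMatrix_mulVec_apply_eq_sum, sum_nnTorus_neighborFinset, Pi.smul_apply, smul_eq_mul,
    sum_mul]
  refine sum_congr rfl fun i _ => ?_
  rw [sum_nnCycle_neighborFinset (hk i), nnCycleEigenvalue, sum_mul]
  refine sum_congr rfl fun s _ => ?_
  rw [sub_eq_add_neg (x i), prod_addChar_update_add, prod_addChar_update_add]
  ring

theorem nnTorus_lapMatrix_mulVec_addChar_comp_eval {R : Type*} [CommRing R] {m r : ℕ}
    {k : Fin m → ℕ} [∀ i, NeZero (k i)] (hk : ∀ i, 2 * r + 1 ≤ k i) (i₀ : Fin m)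
    (χ : AddChar (ZMod (k i₀)) R) :
    (nnTorus m r k).lapMatrix R *ᵥ (fun x => χ (x i₀)) =
      nnCycleEigenvalue r χ • fun x => χ (x i₀) := by
  set ψ := Pi.mulSingle (M := fun i => AddChar (ZMod (k i)) R) i₀ χ
  have hψ₀ : ψ i₀ = χ := Pi.mulSingle_eq_same _ _
  have hψ {i : Fin m} (hi : i ≠ i₀) : ψ i = 1 := Pi.mulSingle_eq_of_ne hi _
  have hprod (x : (i : Fin m) → ZMod (k i)) : ∏ i, ψ i (x i) = χ (x i₀) := by
    rw [prod_eq_single i₀ (fun i _ hi => by rw [hψ hi, AddChar.one_apply]) (by simp), hψ₀]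
  have hsum : ∑ i, nnCycleEigenvalue r (ψ i) = nnCycleEigenvalue r χ := by
    rw [sum_eq_single i₀ (fun i _ hi => by rw [hψ hi, nnCycleEigenvalue_one]) (by simp), hψ₀]
  simpa only [hprod, hsum] using nnTorus_lapMatrix_mulVec_prod_addChar hk ψ

theorem Real.sin_mul_one_add_sum_two_cos (x : ℝ) (r : ℕ) :
    sin x * (1 + ∑ s ∈ Icc 1 r, 2 * cos (2 * s * x)) = sin ((2 * r + 1) * x) := by
  induction r with
  | zero => simp
  | succ r ih =>
    rw [sum_Icc_succ_top (by omega), ← add_assoc, mul_add, ih, ← mul_assoc,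
      mul_comm (sin x) 2, two_mul_sin_mul_cos]
    push_cast
    rw [show x - 2 * (r + 1) * x = -((2 * r + 1) * x) by ring, sin_neg]
    ring_nf

theorem sum_two_sub_two_cos {n : ℕ} (hn : 1 < n) (r : ℕ) :
    ∑ s ∈ Icc 1 r, (2 - 2 * Real.cos (2 * π * s / n)) =
      2 * r + 1 - Real.sin ((2 * r + 1) * π / n) / Real.sin (π / n) := by
  have hsin : Real.sin (π / n) ≠ 0 :=
    (Real.sin_pos_of_pos_of_lt_pi (by positivity)
      (div_lt_self pi_pos (by exact_mod_cast hn))).ne'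
  rw [mul_div_assoc, ← Real.sin_mul_one_add_sum_two_cos, mul_div_cancel_left₀ _ hsin,
    sum_sub_distrib, sum_const, Nat.card_Icc, Nat.add_sub_cancel, nsmul_eq_mul]
  simp_rw [show ∀ s : ℕ, 2 * π * s / n = 2 * s * (π / n) by intro s; ring]
  ring

theorem nnCycleEigenvalue_stdAddChar {n : ℕ} [NeZero n] (hn : 1 < n) (r : ℕ) :
    nnCycleEigenvalue r (ZMod.stdAddChar (N := n)) =
      ((2 * r + 1 - Real.sin ((2 * r + 1) * π / n) / Real.sin (π / n) : ℝ) : ℂ) := by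
  rw [← sum_two_sub_two_cos hn, nnCycleEigenvalue]
  push_cast
  refine sum_congr rfl fun s _ => ?_
  have hneg : -(s : ZMod n) = ((-s : ℤ) : ZMod n) := by push_cast; rfl
  rw [hneg, ← Int.cast_natCast, ZMod.stdAddChar_coe, ZMod.stdAddChar_coe, sub_sub,
    Complex.two_cos]
  push_cast
  ring_nf

theorem neg_one_pow_mod_of_even {R : Type*} [Ring R] {n : ℕ} (hn : Even n)
    (t : ℕ) : (-1 : R) ^ (t % n) = (-1) ^ t := by
  rw [neg_one_pow_eq_pow_mod_two, Nat.mod_mod_of_dvd t (even_iff_two_dvd.1 hn),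
    ← neg_one_pow_eq_pow_mod_two]

def ZMod.negOnePowAddChar (R : Type*) [Ring R] {n : ℕ} [NeZero n] (hn : Even n) :
    AddChar (ZMod n) R where
  toFun a := (-1) ^ a.val
  map_zero_eq_one' := by rw [ZMod.val_zero, pow_zero]
  map_add_eq_mul' a b := by rw [ZMod.val_add, neg_one_pow_mod_of_even hn, pow_add]

theorem sum_two_sub_two_mul_neg_one_pow {R : Type*} [CommRing R] (r : ℕ) :
    ∑ s ∈ Icc 1 r, (2 - 2 * (-1 : R) ^ s) = 2 * r + 1 - (-1) ^ r := by
  induction r with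
  | zero => simp
  | succ r ih =>
    rw [sum_Icc_succ_top (by omega), ih]
    push_cast
    ring

theorem nnCycleEigenvalue_negOnePowAddChar {R : Type*} [CommRing R] {n : ℕ} [NeZero n]
    (hn : Even n) (r : ℕ) :
    nnCycleEigenvalue r (ZMod.negOnePowAddChar R hn) = 2 * r + 1 - (-1) ^ r := by
  set ψ := ZMod.negOnePowAddChar R hn
  have hsq (a : ZMod n) : ψ a * ψ a = 1 := by
    change (-1 : R) ^ a.val * (-1) ^ a.val = 1
    rw [← pow_add, Even.neg_one_pow ⟨_, rfl⟩]
  have hneg (a : ZMod n) : ψ (-a) = ψ a := calc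
    ψ (-a) = ψ (-a) * (ψ a * ψ a) := by rw [hsq, mul_one]
    _ = ψ a := by rw [← mul_assoc, ← AddChar.map_add_eq_mul, neg_add_cancel,
      AddChar.map_zero_eq_one, one_mul]
  have hnat (s : ℕ) : ψ s = (-1) ^ s :=
    (congrArg _ (ZMod.val_natCast n s)).trans (neg_one_pow_mod_of_even hn s)
  rw [← sum_two_sub_two_mul_neg_one_pow, nnCycleEigenvalue]
  refine sum_congr rfl fun s _ => ?_
  rw [hneg, hnat]
  ring

/-- For `m, r ≥ 1` and even `k i` with `2r+1 ≤ k i`: in the `m`-dimensional `r`-nearest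
neighbor torus, `λ_{1,0,…,0} = 2r+1 - sin((2r+1)π/k₁)/sin(π/k₁)` is an eigenvalue of the
Laplacian (eigenvector `v(x) = exp(2πix₁/k₁)`), `λ_{k₁/2,…,k_m/2} = m(2r+1 - cos(πr))` is an
eigenvalue (eigenvector `w(x) = (-1)^{x₁+⋯+x_m}`), and their quotient equals
`(2r+1 - sin((2r+1)π/k₁)/sin(π/k₁)) / (m(2r+1 - cos(πr)))`. -/
theorem multitorus_synchronizability_even (m r : ℕ) (hm : 1 ≤ m)
    (k : Fin m → ℕ) (hke : ∀ i, Even (k i)) (hk : ∀ i, 2 * r + 1 ≤ k i) :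
    haveI : ∀ i, NeZero (k i) := fun i => ⟨by have := hk i; omega⟩
    ((nnTorus m r k).lapMatrix ℂ *ᵥ
        (fun x => Complex.exp (2 * Real.pi * Complex.I * (x ⟨0, hm⟩).val / k ⟨0, hm⟩)) =
      ((2 * r + 1 - Real.sin ((2 * r + 1) * Real.pi / k ⟨0, hm⟩) /
          Real.sin (Real.pi / k ⟨0, hm⟩) : ℝ) : ℂ) •
        (fun x => Complex.exp (2 * Real.pi * Complex.I * (x ⟨0, hm⟩).val / k ⟨0, hm⟩))) ∧
    ((nnTorus m r k).lapMatrix ℂ *ᵥ (fun x => (-1 : ℂ) ^ ∑ i, (x i).val) =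
      ((m * (2 * r + 1 - Real.cos (Real.pi * r)) : ℝ) : ℂ) •
        (fun x => (-1 : ℂ) ^ ∑ i, (x i).val)) ∧
    (2 * (r : ℝ) + 1 - Real.sin ((2 * r + 1) * Real.pi / k ⟨0, hm⟩) /
        Real.sin (Real.pi / k ⟨0, hm⟩)) / (m * (2 * r + 1 - Real.cos (Real.pi * r))) =
      (2 * r + 1 - Real.sin ((2 * r + 1) * Real.pi / k ⟨0, hm⟩) /
        Real.sin (Real.pi / k ⟨0, hm⟩)) / (m * (2 * r + 1 - Real.cos (Real.pi * r))) := by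
  have : ∀ i, NeZero (k i) := fun i => ⟨by have := hk i; omega⟩
  set i₀ : Fin m := ⟨0, hm⟩
  have hk₀ : 1 < k i₀ := by obtain ⟨c, hc⟩ := hke i₀; have := hk i₀; omega
  have hv : (fun x : (i : Fin m) → ZMod (k i) => Complex.exp (2 * π * I * (x i₀).val / k i₀)) =
      fun x => ZMod.stdAddChar (x i₀) := by
    ext x
    rw [ZMod.stdAddChar_apply, ZMod.toCircle_apply]
  have hw : (fun x : (i : Fin m) → ZMod (k i) => (-1 : ℂ) ^ ∑ i, (x i).val) =
      fun x => ∏ i, ZMod.negOnePowAddChar ℂ (hke i) (x i) := by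
    ext x
    exact (prod_pow_eq_pow_sum _ _ _).symm
  refine ⟨?_, ?_, rfl⟩
  · rw [hv, nnTorus_lapMatrix_mulVec_addChar_comp_eval hk, nnCycleEigenvalue_stdAddChar hk₀]
  · rw [hw, nnTorus_lapMatrix_mulVec_prod_addChar hk]
    congr 1
    simp only [nnCycleEigenvalue_negOnePowAddChar, sum_const, card_univ, Fintype.card_fin,
      nsmul_eq_mul, mul_comm π, Real.cos_nat_mul_pi]
    push_cast
    ring
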